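/- arXiv:2501.05347 — 3 statements merged into one kernel-verified Lean document; each statement's English description precedes it below -/
import Mathlib

section
/- The family of sequences {sinc(· - τ) : restricted to ℤ} satisfies ∑_{n∈ℤ} sinc(n - τ) sinc(n - τ') = sinc(τ - τ') for all real τ, τ'; in particular ∑_{n∈ℤ} sinc²(n - τ) = 1 for every real τ. -/
/-! The function `e_τ` on `ℝ/ℤ` equal to `exp (2πiτx)` on `(-1/2, 1/2]` has `n`-th Fourier
coefficient `∫_{-1/2}^{1/2} exp (-2πi(n - τ)x) dx = sinc (n - τ)`. Parseval's identity for
`e_τ, e_τ'` turns the sum into `∫ conj e_τ · e_τ' = ∫ e_{τ'-τ}`, the zeroth Fourier coefficient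
of `e_{τ'-τ}`, which is `sinc (τ - τ')`. -/

open scoped Real

/-- The normalized sinc function: `sinc x = sin (π x) / (π x)` with `sinc 0 = 1`. -/
noncomputable def sinc (x : ℝ) : ℝ := if x = 0 then 1 else Real.sin (π * x) / (π * x)

open MeasureTheory AddCircle Complex ComplexConjugate

section Parseval

variable {T : ℝ} [Fact (0 < T)]

theorem tsum_conj_fourierCoeff_mul_fourierCoeff {f g : AddCircle T → ℂ}
    (hf : MemLp f 2 haarAddCircle) (hg : MemLp g 2 haarAddCircle) :
    ∑' n, conj (fourierCoeff f n) * fourierCoeff g n = ∫ t, conj (f t) * g t ∂haarAddCircle := by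
  have hcoeff : ∀ {h : AddCircle T → ℂ} (hh : MemLp h 2 haarAddCircle) (n : ℤ),
      inner ℂ (fourierBasis n) (hh.toLp h) = fourierCoeff h n := fun hh n => by
    rw [← HilbertBasis.repr_apply_apply, fourierBasis_repr, fourierCoeff_congr_ae hh.coeFn_toLp]
  have hparseval := fourierBasis.tsum_inner_mul_inner (hf.toLp f) (hg.toLp g)
  simp only [← inner_conj_symm (hf.toLp f) (fourierBasis _), hcoeff] at hparseval
  rw [hparseval, L2.inner_def]
  refine integral_congr_ae ?_
  filter_upwards [hf.coeFn_toLp, hg.coeFn_toLp] with t hft hgt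
  rw [hft, hgt, RCLike.inner_apply, mul_comm]

end Parseval

theorem integral_exp_neg_mul_eq_sinc (c : ℝ) :
    ∫ x in (-(1 / 2) : ℝ)..1 / 2, cexp (-(2 * π * I * c * x)) = sinc c := by
  rcases eq_or_ne c 0 with rfl | hc
  · norm_num [sinc]
  have hz : (π : ℂ) * c ≠ 0 := by exact_mod_cast mul_ne_zero Real.pi_ne_zero hc
  have hcoef : -(2 * π * I * c) ≠ 0 := by simp [Real.pi_ne_zero, hc]
  simp_rw [← neg_mul (2 * π * I * c : ℂ)]
  rw [integral_exp_mul_complex hcoef, sinc, if_neg hc]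
  push_cast
  rw [div_eq_div_iff hcoef hz, show -(2 * π * I * c) * (1 / 2 : ℂ) = -(π * c) * I by ring,
    show -(2 * π * I * c) * -(1 / 2 : ℂ) = (π * c) * I by ring]
  linear_combination (π * c * I) * two_sin (π * c) +
    ((cexp (-(π * c) * I) - cexp (π * c * I)) * (π * c)) * I_sq

noncomputable def periodizedExp (τ : ℝ) : AddCircle (1 : ℝ) → ℂ :=
  liftIoc 1 (-(1 / 2)) fun x => cexp (2 * π * I * τ * x)

theorem memLp_periodizedExp (τ : ℝ) : MemLp (periodizedExp τ) 2 haarAddCircle := by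
  have hbound : ∀ x : ℝ, ‖cexp (2 * π * I * τ * x)‖ ≤ 1 := fun x => by
    rw [norm_exp]; simp
  refine MemLp.haarAddCircle (MemLp.memLp_liftIoc ?_)
  exact MemLp.of_bound (by fun_prop) 1 (ae_of_all _ hbound)

theorem fourierCoeff_periodizedExp (τ : ℝ) (n : ℤ) :
    fourierCoeff (periodizedExp τ) n = sinc (n - τ) := by
  rw [fourierCoeff_eq_intervalIntegral _ _ (-(1 / 2)), div_one, one_smul,
    show -(1 / 2 : ℝ) + 1 = 1 / 2 by norm_num, ← integral_exp_neg_mul_eq_sinc]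
  refine intervalIntegral.integral_congr_ae (ae_of_all _ fun x hx => ?_)
  rw [Set.uIoc_of_le (by norm_num)] at hx
  rw [periodizedExp, liftIoc_coe_apply (by norm_num [hx]), fourier_coe_apply, smul_eq_mul,
    ← exp_add]
  push_cast
  ring_nf

theorem conj_mul_periodizedExp (τ τ' : ℝ) (x : AddCircle (1 : ℝ)) :
    conj (periodizedExp τ x) * periodizedExp τ' x = periodizedExp (τ' - τ) x := by
  simp only [periodizedExp, liftIoc, Function.comp_apply, Set.domRestrict_apply]
  rw [← exp_conj, ← exp_add]
  congr 1
  simp only [map_mul, conj_I, conj_ofReal, map_ofNat, ofReal_sub]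
  ring

theorem integral_periodizedExp (τ : ℝ) : ∫ x, periodizedExp τ x ∂haarAddCircle = sinc (-τ) := by
  simpa [fourierCoeff, fourier_zero] using fourierCoeff_periodizedExp τ 0

theorem tsum_sinc_mul_sinc (τ τ' : ℝ) :
    ∑' n : ℤ, sinc (n - τ) * sinc (n - τ') = sinc (τ - τ') := by
  have hparseval := tsum_conj_fourierCoeff_mul_fourierCoeff (memLp_periodizedExp τ)
    (memLp_periodizedExp τ')
  simp only [fourierCoeff_periodizedExp, conj_ofReal, conj_mul_periodizedExp,
    integral_periodizedExp, neg_sub] at hparseval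
  exact_mod_cast hparseval

theorem stmt6 (τ τ' : ℝ) :
    (∑' n : ℤ, sinc ((n : ℝ) - τ) * sinc ((n : ℝ) - τ')) = sinc (τ - τ') ∧
    (∑' n : ℤ, sinc ((n : ℝ) - τ) ^ 2) = 1 := by
  refine ⟨tsum_sinc_mul_sinc τ τ', ?_⟩
  simp only [sq]
  exact (tsum_sinc_mul_sinc τ τ).trans (by simp [sinc])
end

section
/- Let r : ℤ → ℂ be a sequence supported on {-(N-1), ..., N-1}, and define its fractionally shifted bandlimited version (B^τ r)[n] = ∑_{q=-(N-1)}^{N-1} r[q] sinc(n - q - τ) for τ ∈ ℝ. Then the total energy is preserved: ∑_{n∈ℤ} |(B^τ r)[n]|² = ∑_{q=-(N-1)}^{N-1} |r[q]|². -/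
/-!
Identify `ℝ/ℤ` with `(-1/2, 1/2]` and put `e_c(t) = exp(2πi c t)` there, for real `c`. Since
`∫_{-1/2}^{1/2} exp(2πi d t) dt = sinc d`, we get `⟪e_a, e_b⟫ = sinc (b - a)` in `L²`. So the
family `(e_{q+τ})_{q∈ℤ}` is orthonormal (sinc vanishes at the nonzero integers), `e_n` is the
`n`-th Fourier mode, and `⟪e_n, ∑ r q • e_{q+τ}⟫ = (B^τ r)[n]`. Parseval for the Fourier basis,
then orthonormality, give `∑ₙ |(B^τ r)[n]|² = ‖∑ r q • e_{q+τ}‖² = ∑ |r q|²`.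
-/

open scoped Real
open Finset

open scoped ComplexConjugate InnerProductSpace
open MeasureTheory AddCircle Complex

theorem Orthonormal.norm_sum_smul_sq {𝕜 E ι : Type*} [RCLike 𝕜] [NormedAddCommGroup E]
    [InnerProductSpace 𝕜 E] {v : ι → E} (hv : Orthonormal 𝕜 v) (c : ι → 𝕜) (s : Finset ι) :
    ‖∑ i ∈ s, c i • v i‖ ^ 2 = ∑ i ∈ s, ‖c i‖ ^ 2 := by
  have : ((‖∑ i ∈ s, c i • v i‖ : ℝ) : 𝕜) ^ 2 = ∑ i ∈ s, ((‖c i‖ : ℝ) : 𝕜) ^ 2 := by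
    simp only [← inner_self_eq_norm_sq_to_K, hv.inner_sum, RCLike.conj_mul]
  exact mod_cast this

theorem HilbertBasis.hasSum_norm_inner_sq {𝕜 E ι : Type*} [RCLike 𝕜] [NormedAddCommGroup E]
    [InnerProductSpace 𝕜 E] (b : HilbertBasis ι 𝕜 E) (x : E) :
    HasSum (fun i => ‖⟪b i, x⟫_𝕜‖ ^ 2) (‖x‖ ^ 2) := by
  have h := lp.hasSum_norm (p := 2) (by norm_num) (b.repr x)
  simp only [ENNReal.toReal_ofNat, Real.rpow_two, LinearIsometryEquiv.norm_map] at h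
  simpa only [b.repr_apply_apply] using h

theorem HilbertBasis.hasSum_norm_sum_mul_inner_sq {𝕜 E ι κ : Type*} [RCLike 𝕜]
    [NormedAddCommGroup E] [InnerProductSpace 𝕜 E] (b : HilbertBasis ι 𝕜 E) {v : κ → E}
    (hv : Orthonormal 𝕜 v) (c : κ → 𝕜) (s : Finset κ) :
    HasSum (fun i => ‖∑ q ∈ s, c q * ⟪b i, v q⟫_𝕜‖ ^ 2) (∑ q ∈ s, ‖c q‖ ^ 2) := by
  simpa only [inner_sum, inner_smul_right, hv.norm_sum_smul_sq] using
    b.hasSum_norm_inner_sq (∑ q ∈ s, c q • v q)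

theorem sinc_eq_real_sinc (x : ℝ) : sinc x = Real.sinc (π * x) := by
  simp [sinc, Real.sinc, Real.pi_ne_zero]

theorem sinc_neg (x : ℝ) : sinc (-x) = sinc x := by
  simp [sinc_eq_real_sinc]

theorem sinc_intCast (k : ℤ) : sinc k = if k = 0 then 1 else 0 := by
  split_ifs with h
  · simp [h, sinc]
  · simp [sinc, h, mul_comm π, Real.sin_int_mul_pi]

theorem integral_exp_two_pi_I_mul_eq_sinc (d : ℝ) :
    ∫ t in -(1 / 2 : ℝ)..1 / 2, exp (2 * π * I * d * t) = sinc d := by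
  rcases eq_or_ne d 0 with rfl | hd
  · norm_num [sinc]
  have hc : 2 * π * I * d ≠ 0 := by simp [Real.pi_ne_zero, hd, I_ne_zero]
  rw [integral_exp_mul_complex hc, sinc, if_neg hd]
  push_cast
  rw [Complex.sin, show 2 * π * I * d * (1 / 2) = π * d * I by ring,
    show 2 * π * I * d * -(1 / 2) = -(π * d) * I by ring]
  field_simp
  ring_nf
  rw [I_sq]
  ring

-- On the symmetric fundamental domain the inner products come out real, with no phase `exp(πi d)`.
noncomputable def expIoc (c : ℝ) : AddCircle (1 : ℝ) → ℂ :=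
  liftIoc 1 (-(1 / 2)) fun t => exp (2 * π * I * c * t)

theorem expIoc_apply (c : ℝ) (x : AddCircle (1 : ℝ)) :
    expIoc c x = exp (2 * π * I * c * (equivIoc 1 (-(1 / 2)) x : ℝ)) := rfl

theorem norm_expIoc (c : ℝ) (x : AddCircle (1 : ℝ)) : ‖expIoc c x‖ = 1 := by
  rw [expIoc_apply, show 2 * π * I * c * (equivIoc 1 (-(1 / 2)) x : ℝ)
    = ((2 * π * c * (equivIoc 1 (-(1 / 2)) x : ℝ) : ℝ) : ℂ) * I by push_cast; ring,
    norm_exp_ofReal_mul_I]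

theorem conj_expIoc_mul (a b : ℝ) (x : AddCircle (1 : ℝ)) :
    conj (expIoc a x) * expIoc b x = expIoc (b - a) x := by
  simp only [expIoc_apply, ← exp_conj, ← exp_add, map_mul, conj_I, conj_ofReal, map_ofNat]
  congr 1
  push_cast
  ring

theorem expIoc_intCast (n : ℤ) : expIoc n = fourier n := by
  ext x
  rw [expIoc_apply, ← coe_equivIoc (a := -(1 / 2)) (y := x), fourier_coe_apply, coe_equivIoc]
  push_cast
  ring_nf

theorem measurable_expIoc (c : ℝ) : Measurable (expIoc c) :=
  (by fun_prop : Continuous fun t : ℝ => exp (2 * π * I * c * t)).measurable.comp <|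
    measurable_subtype_coe.comp (measurableEquivIoc 1 (-(1 / 2))).measurable

theorem memLp_expIoc (c : ℝ) : MemLp (expIoc c) 2 haarAddCircle :=
  (memLp_top_of_bound (measurable_expIoc c).aestronglyMeasurable 1
    (.of_forall fun x => (norm_expIoc c x).le)).mono_exponent le_top

theorem integral_expIoc (d : ℝ) : ∫ x, expIoc d x ∂haarAddCircle = sinc d := by
  rw [integral_haarAddCircle, expIoc, integral_liftIoc_eq_intervalIntegral, inv_one, one_smul]
  norm_num [integral_exp_two_pi_I_mul_eq_sinc]

noncomputable def expLp (c : ℝ) : Lp ℂ 2 (haarAddCircle (T := 1)) := (memLp_expIoc c).toLp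

theorem inner_expLp (a b : ℝ) : ⟪expLp a, expLp b⟫_ℂ = sinc (b - a) := by
  rw [L2.inner_def, ← integral_expIoc]
  refine integral_congr_ae ?_
  filter_upwards [(memLp_expIoc a).coeFn_toLp, (memLp_expIoc b).coeFn_toLp] with x ha hb
  rw [expLp, expLp, ha, hb, RCLike.inner_apply', conj_expIoc_mul]

theorem expLp_intCast (n : ℤ) : expLp n = fourierBasis (T := 1) n := by
  rw [coe_fourierBasis, expLp, fourierLp]
  simp_rw [expIoc_intCast]
  rfl

theorem inner_fourierBasis_expLp (n : ℤ) (c : ℝ) :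
    ⟪fourierBasis (T := 1) n, expLp c⟫_ℂ = sinc (n - c) := by
  rw [← expLp_intCast, inner_expLp, ← sinc_neg, neg_sub]

theorem orthonormal_expLp_intCast_add (τ : ℝ) : Orthonormal ℂ fun q : ℤ => expLp (q + τ) := by
  classical
  refine orthonormal_iff_ite.mpr fun q q' => ?_
  rw [inner_expLp, add_sub_add_right_eq_sub, ← Int.cast_sub, sinc_intCast]
  simp only [sub_eq_zero, @eq_comm _ q']
  split_ifs <;> simp

theorem stmt7_general (N : ℕ) (τ : ℝ) (r : ℤ → ℂ) :
    (∑' n : ℤ, ‖∑ q ∈ Finset.Icc (-(N : ℤ) + 1) ((N : ℤ) - 1),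
        r q * ((sinc ((n : ℝ) - (q : ℝ) - τ) : ℝ) : ℂ)‖ ^ 2) =
    ∑ q ∈ Finset.Icc (-(N : ℤ) + 1) ((N : ℤ) - 1), ‖r q‖ ^ 2 := by
  have h := (fourierBasis (T := 1)).hasSum_norm_sum_mul_inner_sq (orthonormal_expLp_intCast_add τ) r
    (Finset.Icc (-(N : ℤ) + 1) ((N : ℤ) - 1))
  simp only [inner_fourierBasis_expLp, ← sub_sub] at h
  exact h.tsum_eq

theorem stmt7 (N : ℕ) (hN : 0 < N) (τ : ℝ) (r : ℤ → ℂ)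
    (hr : ∀ q : ℤ, q ∉ Finset.Icc (-(N : ℤ) + 1) ((N : ℤ) - 1) → r q = 0) :
    (∑' n : ℤ, ‖∑ q ∈ Finset.Icc (-(N : ℤ) + 1) ((N : ℤ) - 1),
        r q * ((sinc ((n : ℝ) - (q : ℝ) - τ) : ℝ) : ℂ)‖ ^ 2) =
    ∑ q ∈ Finset.Icc (-(N : ℤ) + 1) ((N : ℤ) - 1), ‖r q‖ ^ 2 :=
  stmt7_general N τ r
end

section
/- The DPSS eigenvalue equation λ p[n] = ∑_{m} p[m] sin(2πW(n-m))/(π(n-m)) (with the diagonal term 2W at n = m), considered as the eigenproblem of the K×K symmetric matrix A with entries A_{n,m} = sin(2πW(n-m))/(π(n-m)) for n≠m and A_{n,n} = 2W, has all eigenvalues strictly between 0 and 1 when 0 < W < 1/2. -/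
/-!
Writing `V(f) = ∑ₙ vₙ e^{2πinf}`, the entries of the prolate matrix are the Fourier coefficients
`A n m = ∫_{-W}^{W} cos (2π(n-m)f) df` of the indicator of `[-W, W]`, so
`vᵀAv = ∫_{-W}^{W} |V(f)|² df`, while by orthogonality `vᵀv = ∫_{-1/2}^{1/2} |V(f)|² df`.
For `v ≠ 0`, `V` is a nonzero polynomial evaluated at `e^{2πif}`, so it vanishes at finitely
many points of any interval of length `< 1`; hence `|V|²` has positive integral over `[-W, W]`
and over `[-1/2, 1/2] \ [-W, W]`, which gives `0 < vᵀAv < vᵀv`.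
-/

open scoped Real
open Matrix Complex Polynomial Set

noncomputable def dtft {K : ℕ} (v : Fin K → ℝ) (f : ℝ) : ℂ :=
  ∑ n : Fin K, (v n : ℂ) * exp (↑(2 * π * n * f) * I)

section Dtft

variable {K : ℕ} (v : Fin K → ℝ)

@[fun_prop]
lemma continuous_dtft : Continuous (dtft v) := by
  unfold dtft; fun_prop

lemma normSq_dtft (f : ℝ) :
    normSq (dtft v f) = ∑ n : Fin K, ∑ m : Fin K, v n * v m * Real.cos (2 * π * (n - m) * f) := by
  have hre : (dtft v f).re = ∑ n : Fin K, v n * Real.cos (2 * π * n * f) := by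
    simp only [dtft, re_sum, re_ofReal_mul, exp_ofReal_mul_I_re]
  have him : (dtft v f).im = ∑ n : Fin K, v n * Real.sin (2 * π * n * f) := by
    simp only [dtft, im_sum, im_ofReal_mul, exp_ofReal_mul_I_im]
  rw [normSq_apply, hre, him, Finset.sum_mul_sum, Finset.sum_mul_sum, ← Finset.sum_add_distrib]
  refine Finset.sum_congr rfl fun n _ => ?_
  rw [← Finset.sum_add_distrib]
  refine Finset.sum_congr rfl fun m _ => ?_
  rw [show 2 * π * (n - m) * f = 2 * π * n * f - 2 * π * m * f by ring, Real.cos_sub]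
  ring

lemma dtft_eq_eval (f : ℝ) :
    dtft v f = (∑ n : Fin K, C (v n : ℂ) * X ^ (n : ℕ)).eval (exp ((2 * π * f : ℝ) * I)) := by
  simp only [dtft, eval_finsetSum, eval_mul, eval_C, eval_pow, eval_X, ← exp_nat_mul]
  refine Finset.sum_congr rfl fun n _ => ?_
  push_cast
  ring_nf

lemma eq_zero_of_dtft_eq_zero_on_Ioo {a b : ℝ} (hab : a < b)
    (h : ∀ f ∈ Ioo a b, dtft v f = 0) : v = 0 := by
  set p : ℂ[X] := ∑ n : Fin K, C (v n : ℂ) * X ^ (n : ℕ)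
  -- `f ↦ e^{2πif}` is injective only on intervals of length `< 1`.
  set b' := min b (a + 1 / 2)
  have hinj : InjOn (fun f : ℝ => exp (↑(2 * π * f) * I)) (Ioo a b') := by
    intro x hx y hy hxy
    have hx' : 2 * π * x ∈ Icc (2 * π * a) (2 * π * b') := by
      constructor <;> nlinarith [hx.1, hx.2, Real.pi_pos]
    have hy' : 2 * π * y ∈ Icc (2 * π * a) (2 * π * b') := by
      constructor <;> nlinarith [hy.1, hy.2, Real.pi_pos]
    have := Circle.exp_injOn_Icc (by nlinarith [min_le_right b (a + 1 / 2), Real.pi_pos]) hx' hy'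
      (Subtype.ext hxy)
    nlinarith [Real.pi_pos]
  have hroots : ((fun f : ℝ => exp (↑(2 * π * f) * I)) '' Ioo a b').Infinite :=
    (Ioo_infinite (lt_min hab (by linarith))).image hinj
  have hp : p = 0 := by
    refine eq_zero_of_infinite_isRoot p (hroots.mono ?_)
    rintro _ ⟨f, hf, rfl⟩
    rw [mem_ofPred_eq, IsRoot, ← dtft_eq_eval]
    exact h f ⟨hf.1, hf.2.trans_le (min_le_left _ _)⟩
  funext j
  have hcoeff : p.coeff j = v j := by
    simp [p, finsetSum_coeff, Fin.val_inj]
  simpa [hp] using hcoeff.symm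

lemma integral_normSq_dtft_pos (hv : v ≠ 0) {a b : ℝ} (hab : a < b) :
    0 < ∫ f in a..b, normSq (dtft v f) := by
  refine intervalIntegral.integral_pos hab (by fun_prop) (fun f _ => normSq_nonneg _) ?_
  by_contra! hzero
  exact hv <| eq_zero_of_dtft_eq_zero_on_Ioo v hab fun f hf =>
    normSq_eq_zero.1 <| (hzero f (Ioo_subset_Icc_self hf)).antisymm (normSq_nonneg _)

lemma integral_normSq_dtft (a b : ℝ) :
    ∫ f in a..b, normSq (dtft v f) =
      ∑ n : Fin K, ∑ m : Fin K, v n * v m * ∫ f in a..b, Real.cos (2 * π * (n - m) * f) := by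
  simp_rw [normSq_dtft]
  rw [intervalIntegral.integral_finsetSum fun n _ => by
    apply Continuous.intervalIntegrable; fun_prop]
  refine Finset.sum_congr rfl fun n _ => ?_
  rw [intervalIntegral.integral_finsetSum fun m _ => by
    apply Continuous.intervalIntegrable; fun_prop]
  simp_rw [intervalIntegral.integral_const_mul]

end Dtft

lemma dotProduct_mulVec_eq_integral_normSq_dtft {K : ℕ} {A : Matrix (Fin K) (Fin K) ℝ} {a b : ℝ}
    (hA : ∀ n m : Fin K, A n m = ∫ f in a..b, Real.cos (2 * π * (n - m) * f)) (v : Fin K → ℝ) :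
    v ⬝ᵥ (A *ᵥ v) = ∫ f in a..b, normSq (dtft v f) := by
  simp only [integral_normSq_dtft, ← hA, dotProduct, mulVec, Finset.mul_sum]
  refine Finset.sum_congr rfl fun n _ => Finset.sum_congr rfl fun m _ => ?_
  ring

lemma integral_cos_two_pi_mul_of_ne_zero {d : ℝ} (hd : d ≠ 0) (W : ℝ) :
    ∫ f in -W..W, Real.cos (2 * π * d * f) = Real.sin (2 * π * W * d) / (π * d) := by
  have hc : 2 * π * d ≠ 0 := by positivity
  rw [intervalIntegral.integral_comp_mul_left (fun f => Real.cos f) hc, integral_cos,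
    mul_neg, Real.sin_neg, smul_eq_mul]
  field_simp
  ring_nf

lemma integral_cos_two_pi_sub_mul {K : ℕ} (W : ℝ) (n m : Fin K) :
    ∫ f in -W..W, Real.cos (2 * π * (n - m) * f) =
      if n = m then 2 * W else Real.sin (2 * π * W * (n - m)) / (π * (n - m)) := by
  rcases eq_or_ne n m with rfl | hnm
  · simp only [sub_self, mul_zero, zero_mul, Real.cos_zero, intervalIntegral.integral_const,
      if_true, smul_eq_mul]
    ring
  · have hd : (n : ℝ) - m ≠ 0 := sub_ne_zero.2 (by exact_mod_cast Fin.val_injective.ne hnm)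
    rw [if_neg hnm, integral_cos_two_pi_mul_of_ne_zero hd]

lemma one_apply_eq_integral_cos {K : ℕ} (n m : Fin K) :
    (1 : Matrix (Fin K) (Fin K) ℝ) n m = ∫ f in -(1 / 2)..1 / 2, Real.cos (2 * π * (n - m) * f) := by
  rw [integral_cos_two_pi_sub_mul, one_apply]
  split_ifs
  · norm_num
  · have : 2 * π * (1 / 2) * ((n : ℝ) - m) = ((n : ℤ) - m : ℤ) * π := by push_cast; ring
    rw [this, Real.sin_int_mul_pi, zero_div]

theorem stmt17_general (W : ℝ) (hW : 0 < W ∧ W < 1 / 2) (K : ℕ)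
    (A : Matrix (Fin K) (Fin K) ℝ)
    (hA : ∀ n m : Fin K, A n m =
      if n = m then 2 * W
      else Real.sin (2 * π * W * ((n : ℝ) - (m : ℝ))) / (π * ((n : ℝ) - (m : ℝ))))
    (lam : ℝ) (v : Fin K → ℝ) (hv : v ≠ 0) (heig : A.mulVec v = lam • v) :
    0 < lam ∧ lam < 1 := by
  obtain ⟨hW₀, hW₁⟩ := hW
  have hAv : v ⬝ᵥ (A *ᵥ v) = ∫ f in -W..W, normSq (dtft v f) :=
    dotProduct_mulVec_eq_integral_normSq_dtft (fun n m => by rw [hA, integral_cos_two_pi_sub_mul]) v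
  have hvv : v ⬝ᵥ v = ∫ f in -(1 / 2)..1 / 2, normSq (dtft v f) := by
    simpa using dotProduct_mulVec_eq_integral_normSq_dtft one_apply_eq_integral_cos v
  have hlam : v ⬝ᵥ (A *ᵥ v) = lam * (v ⬝ᵥ v) := by
    rw [heig, dotProduct_smul, smul_eq_mul]
  have hint : ∀ a b, IntervalIntegrable (fun f => normSq (dtft v f)) MeasureTheory.volume a b :=
    fun a b => by apply Continuous.intervalIntegrable; fun_prop
  have hsplit : ∫ f in -(1 / 2)..1 / 2, normSq (dtft v f) =
      (∫ f in -(1 / 2)..-W, normSq (dtft v f)) + (∫ f in -W..W, normSq (dtft v f)) +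
        ∫ f in W..1 / 2, normSq (dtft v f) := by
    rw [intervalIntegral.integral_add_adjacent_intervals (hint _ _) (hint _ _),
      intervalIntegral.integral_add_adjacent_intervals (hint _ _) (hint _ _)]
  have hlow := integral_normSq_dtft_pos v hv (show -(1 / 2) < -W by linarith)
  have hmid := integral_normSq_dtft_pos v hv (show -W < W by linarith)
  have hhigh := integral_normSq_dtft_pos v hv hW₁
  constructor <;> nlinarith

theorem stmt17 (W : ℝ) (hW : 0 < W ∧ W < 1 / 2) (K : ℕ) (hK : 0 < K)
    (A : Matrix (Fin K) (Fin K) ℝ)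
    (hA : ∀ n m : Fin K, A n m =
      if n = m then 2 * W
      else Real.sin (2 * π * W * ((n : ℝ) - (m : ℝ))) / (π * ((n : ℝ) - (m : ℝ))))
    (lam : ℝ) (v : Fin K → ℝ) (hv : v ≠ 0) (heig : A.mulVec v = lam • v) :
    0 < lam ∧ lam < 1 :=
  stmt17_general W hW K A hA lam v hv heig
end
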